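/- For any λ ∈ [-1,1] and any real numbers r, s, t, one has √(f*((r s; t -r))) ≥ (1/2)(Θ_λ(r,s) + λt), where f*(N) = (1/4)·max{|N|² - 2 det N, (n₁₂ - n₂₁)²} for trace-free N. -/

import Mathlib

noncomputable def frobSq (M : Matrix (Fin 2) (Fin 2) ℝ) : ℝ := ∑ i, ∑ j, (M i j)^2

/-- f*(N) = (1/4)·max{|N|² - 2 det N, (n₁₂ - n₂₁)²} (for trace-free N). -/
noncomputable def fStar (N : Matrix (Fin 2) (Fin 2) ℝ) : ℝ :=
  (1/4) * max (frobSq N - 2 * N.det) ((N 0 1 - N 1 0)^2)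

noncomputable def Theta (l : ℝ) (z : ℝ × ℝ) : ℝ :=
  if 0 < z.2 ∧ (1 + l) * z.1^2 < (1 - l) * z.2^2 then
    (1 + l) * z.1^2 / |z.2| + |z.2|
  else if z.2 < 0 ∧ (1 - l) * z.1^2 < (1 + l) * z.2^2 then
    (1 - l) * z.1^2 / |z.2| + |z.2|
  else
    2 * |z.1| * Real.sqrt (1 - l^2) + l * z.2

/-!
By the formula for `f*`, `2 √(f*(r s; t -r)) = max {√(4r² + (s+t)²), |s - t|}`, so the claim is
`Θ_λ(r, s) + λt ≤ max {√(4r² + (s+t)²), |s - t|}`. On the last branch of `Θ_λ` this is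
Cauchy–Schwarz for the unit vector `(√(1-λ²), λ)` against `(2r, s+t)`. The branch `s < 0` is
the branch `s > 0` for `(-λ, -s, -t)`. On the branch `s > 0`, either the left side is at most
`s - t`, or it exceeds `s - t`, which forces `(1+λ)(r² + ts) > 0`; the gap between the squares
of the two sides is then this positive number times a nonnegative one.
-/

theorem sqrt_fStar_traceless (r s t : ℝ) :
    Real.sqrt (fStar !![r, s; t, -r])
      = (1 / 2) * max (Real.sqrt (4 * r ^ 2 + (s + t) ^ 2)) |s - t| := by
  have hf : fStar !![r, s; t, -r] = (1 / 2) ^ 2 * max (4 * r ^ 2 + (s + t) ^ 2) ((s - t) ^ 2) := by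
    simp only [fStar, frobSq, Matrix.det_fin_two, Fin.sum_univ_two, Matrix.of_apply,
      Matrix.cons_val', Matrix.cons_val_zero, Matrix.cons_val_one, Matrix.empty_val',
      Matrix.cons_val_fin_one]
    ring_nf
  rw [hf, Real.sqrt_mul (by positivity), Real.sqrt_sq (by norm_num),
    Real.sqrt_monotone.map_max, Real.sqrt_sq_eq_abs]

theorem mul_sqrt_one_sub_sq_add_mul_le_sqrt {l : ℝ} (hl : l ^ 2 ≤ 1) (a u : ℝ) :
    a * Real.sqrt (1 - l ^ 2) + l * u ≤ Real.sqrt (a ^ 2 + u ^ 2) := by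
  have hc : Real.sqrt (1 - l ^ 2) ^ 2 = 1 - l ^ 2 := Real.sq_sqrt (by linarith)
  refine Real.le_sqrt_of_sq_le ?_
  nlinarith [sq_nonneg (Real.sqrt (1 - l ^ 2) * u - l * a)]

theorem div_add_add_mul_le_max {l r s : ℝ} (hl : -1 ≤ l) (hs : 0 < s)
    (h : (1 + l) * r ^ 2 ≤ (1 - l) * s ^ 2) (t : ℝ) :
    (1 + l) * r ^ 2 / s + s + l * t ≤ max (Real.sqrt (4 * r ^ 2 + (s + t) ^ 2)) |s - t| := by
  set L := (1 + l) * r ^ 2 / s + s + l * t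
  rcases le_or_gt L (s - t) with hL | hL
  · exact le_max_of_le_right (hL.trans (le_abs_self _))
  refine le_max_of_le_left (Real.le_sqrt_of_sq_le ?_)
  have hLs : L * s = (1 + l) * r ^ 2 + s ^ 2 + l * t * s := by
    simp only [L]; field_simp
  have hX : 0 < (1 + l) * (r ^ 2 + t * s) := by linarith [mul_lt_mul_of_pos_right hL hs]
  have hl0 : 0 < 1 + l := by
    rcases hl.lt_or_eq with hl | hl
    · linarith
    · rw [← hl] at hX; norm_num at hX
  have hgap : (1 + l) * ((4 * r ^ 2 + (s + t) ^ 2) * s ^ 2 - (L * s) ^ 2)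
      = (1 + l) * (r ^ 2 + t * s)
        * ((1 + l) * ((1 - l) * s ^ 2 - (1 + l) * r ^ 2)
          + (1 - l) * ((1 - l) * s ^ 2 + (1 + l) * t * s)) := by
    rw [hLs]; ring
  have hl1 : 0 ≤ 1 - l :=
    nonneg_of_mul_nonneg_left (h.trans' (by positivity)) (pow_pos hs 2)
  have hfirst : 0 ≤ (1 - l) * s ^ 2 - (1 + l) * r ^ 2 := by linarith
  have hsecond : 0 ≤ (1 - l) * s ^ 2 + (1 + l) * t * s := by nlinarith
  have hgap_nonneg : 0 ≤ (4 * r ^ 2 + (s + t) ^ 2) * s ^ 2 - (L * s) ^ 2 :=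
    nonneg_of_mul_nonneg_right (by rw [hgap]; positivity) hl0
  rw [mul_pow] at hgap_nonneg
  exact le_of_mul_le_mul_right (by linarith) (pow_pos hs 2)

theorem Theta_add_mul_le_max {l : ℝ} (hl : l ∈ Set.Icc (-1 : ℝ) 1) (r s t : ℝ) :
    Theta l (r, s) + l * t ≤ max (Real.sqrt (4 * r ^ 2 + (s + t) ^ 2)) |s - t| := by
  obtain ⟨hl₁, hl₂⟩ := hl
  unfold Theta
  dsimp only
  split_ifs with hpos hneg
  · rw [abs_of_pos hpos.1]
    exact div_add_add_mul_le_max hl₁ hpos.1 hpos.2.le t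
  · have hflip := div_add_add_mul_le_max (l := -l) (s := -s) (r := r) (by linarith)
      (by linarith [hneg.1]) (by linarith [hneg.2]) (-t)
    rw [show (-s + -t) ^ 2 = (s + t) ^ 2 by ring, show -s - -t = -(s - t) by ring, abs_neg]
      at hflip
    rw [abs_of_neg hneg.1]
    convert hflip using 1
    ring
  · refine le_max_of_le_left ?_
    have hcs := mul_sqrt_one_sub_sq_add_mul_le_sqrt (by nlinarith) (2 * |r|) (s + t)
    rw [mul_pow, sq_abs] at hcs
    norm_num at hcs
    linarith

theorem fStar_lower_bound (l : ℝ) (hl : l ∈ Set.Icc (-1 : ℝ) 1) (r s t : ℝ) :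
    Real.sqrt (fStar !![r, s; t, -r]) ≥ (1/2) * (Theta l (r, s) + l * t) := by
  rw [ge_iff_le, sqrt_fStar_traceless]
  linarith [Theta_add_mul_le_max hl r s t]
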